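/- Let τ, K > 0 and let W ∈ ℂ^{N×K} with all entries of modulus √β, Q = W W^H, w̄₁ = ∑_{k=1}^K [W]_{1,k}, and κ = sqrt(τ² + 4L|w̄₁|²) where τ = σ²_n/(ρσ²) + tr(Q) + (L−1)[Q]_{1,1} − K with σ_n, ρ, σ > 0. Then all three quantities K + (τ−κ)/2, K + (τ+κ)/2, and K + τ − L[Q]_{1,1} are strictly positive. -/

import Mathlib

/-! The three numbers are the eigenvalues of `J_D + c I` with `c = σn² / (ρ σ²) > 0` (the prior
term) and `J_D` positive semidefinite. Concretely, with `d = [Q]₁₁ = K (√β)²` and `tr Q = N d ≥ d`,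
the third one is `c + tr Q - d > 0`, and `K + (τ ± κ)/2` are the roots of `x² - p x + q` with
`p = 2K + τ` and `q = K (K + τ) - L |w̄₁|²`; both coefficients are positive because
`|w̄₁| ≤ K √β`, and a real quadratic with `p, q > 0` has only positive roots. -/

open Matrix Finset

theorem Matrix.mul_conjTranspose_self_apply_self {𝕜 m n : Type*} [RCLike 𝕜] [Fintype n]
    (A : Matrix m n 𝕜) (i : m) : (A * Aᴴ) i i = ∑ j, (‖A i j‖ ^ 2 : 𝕜) := by
  simp only [mul_apply, conjTranspose_apply, RCLike.star_def, RCLike.mul_conj]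

theorem Matrix.mul_conjTranspose_self_apply_self_of_norm_eq {𝕜 m n : Type*} [RCLike 𝕜]
    [Fintype n] {A : Matrix m n 𝕜} {r : ℝ} (hA : ∀ i j, ‖A i j‖ = r) (i : m) :
    (A * Aᴴ) i i = (Fintype.card n * r ^ 2 : ℝ) := by
  simp [mul_conjTranspose_self_apply_self, hA]

theorem Matrix.trace_mul_conjTranspose_self_of_norm_eq {𝕜 m n : Type*} [RCLike 𝕜]
    [Fintype m] [Fintype n] {A : Matrix m n 𝕜} {r : ℝ} (hA : ∀ i j, ‖A i j‖ = r) :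
    (A * Aᴴ).trace = (Fintype.card m * (Fintype.card n * r ^ 2) : ℝ) := by
  simp [trace, mul_conjTranspose_self_apply_self_of_norm_eq hA]

theorem norm_sum_le_card_mul_of_norm_eq {E ι : Type*} [SeminormedAddCommGroup E] [Fintype ι]
    {f : ι → E} {r : ℝ} (hf : ∀ i, ‖f i‖ = r) : ‖∑ i, f i‖ ≤ Fintype.card ι * r := by
  simpa [hf] using norm_sum_le univ f

theorem Real.sqrt_sq_sub_lt {p q : ℝ} (hp : 0 < p) (hq : 0 < q) : √(p ^ 2 - 4 * q) < p :=
  (Real.sqrt_lt' hp).2 (by linarith)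

theorem fim_eigenvalues_pos_of_bounds {c d t K L w τ : ℝ} (hc : 0 < c) (hd : 0 ≤ d)
    (hdt : d ≤ t) (hK : 0 < K) (hL : 0 ≤ L) (hw : w ^ 2 ≤ K * d)
    (hτ : τ = c + t + (L - 1) * d - K) :
    0 < K + (τ - √(τ ^ 2 + 4 * L * w ^ 2)) / 2 ∧ 0 < K + (τ + √(τ ^ 2 + 4 * L * w ^ 2)) / 2 ∧
      0 < K + τ - L * d := by
  have hKτ : K + τ = c + (t - d) + L * d := by rw [hτ]; ring
  have hp : 0 < 2 * K + τ := by nlinarith [mul_nonneg hL hd]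
  have hq : 0 < K * (K + τ) - L * w ^ 2 := by
    rw [hKτ]
    nlinarith [mul_pos hK hc, mul_nonneg hK.le (sub_nonneg.2 hdt), mul_le_mul_of_nonneg_left hw hL]
  have hκ : √(τ ^ 2 + 4 * L * w ^ 2) < 2 * K + τ := by
    have h := Real.sqrt_sq_sub_lt hp hq
    rwa [show (2 * K + τ) ^ 2 - 4 * (K * (K + τ) - L * w ^ 2) = τ ^ 2 + 4 * L * w ^ 2 by ring] at h
  exact ⟨by linarith, by linarith [Real.sqrt_nonneg (τ ^ 2 + 4 * L * w ^ 2)], by linarith⟩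

/-- The three eigenvalues K+(τ−κ)/2, K+(τ+κ)/2, K+τ−L[Q]₁₁ of the Bayesian FIM
(scaled) are strictly positive, where W has constant-modulus entries √β,
Q = W Wᴴ, w̄₁ = ∑_k [W]_{1,k}, τ = σn²/(ρσ²)+tr(Q)+(L−1)[Q]₁₁−K
and κ = √(τ²+4L|w̄₁|²). -/
theorem bayes_fim_eigenvalues_pos (N K L : ℕ) (hN : 2 ≤ N) (hK : 1 ≤ K)
    (β ρ σ σn : ℝ) (hρ : 0 < ρ) (hσ : 0 < σ) (hσn : 0 < σn)
    (W : Matrix (Fin N) (Fin K) ℂ)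
    (hW : ∀ i k, ‖W i k‖ = Real.sqrt β)
    (Q : Matrix (Fin N) (Fin N) ℂ) (hQ : Q = W * Wᴴ)
    (w1 : ℂ) (hw1 : w1 = ∑ k, W ⟨0, by omega⟩ k)
    (τ : ℝ)
    (hτ : τ = σn ^ 2 / (ρ * σ ^ 2) + Q.trace.re +
        ((L : ℝ) - 1) * (Q ⟨0, by omega⟩ ⟨0, by omega⟩).re - K)
    (κ : ℝ) (hκ : κ = Real.sqrt (τ ^ 2 + 4 * L * ‖w1‖ ^ 2)) :
    0 < (K : ℝ) + (τ - κ) / 2 ∧ 0 < (K : ℝ) + (τ + κ) / 2 ∧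
      0 < (K : ℝ) + τ - (L : ℝ) * (Q ⟨0, by omega⟩ ⟨0, by omega⟩).re := by
  have hdiag : ∀ i, (Q i i).re = K * √β ^ 2 := by
    intro i
    rw [hQ, mul_conjTranspose_self_apply_self_of_norm_eq hW, Fintype.card_fin]
    exact RCLike.ofReal_re (K := ℂ) _
  have htr : Q.trace.re = N * (K * √β ^ 2) := by
    rw [hQ, trace_mul_conjTranspose_self_of_norm_eq hW, Fintype.card_fin, Fintype.card_fin]
    exact RCLike.ofReal_re (K := ℂ) _
  have hw1_sq : ‖w1‖ ^ 2 ≤ K * (K * √β ^ 2) := by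
    have hw1_le : ‖w1‖ ≤ K * √β := by
      simpa [hw1] using norm_sum_le_card_mul_of_norm_eq (hW ⟨0, by omega⟩)
    nlinarith [norm_nonneg w1]
  have hN_one : (1 : ℝ) ≤ N := by exact_mod_cast (by omega : 1 ≤ N)
  subst hκ
  rw [htr, hdiag] at hτ
  rw [hdiag]
  exact fim_eigenvalues_pos_of_bounds (by positivity) (by positivity)
    (le_mul_of_one_le_left (by positivity) hN_one) (by exact_mod_cast hK) L.cast_nonneg hw1_sq hτ
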